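/- Let G be a finite simple graph and u ∈ V(G) a vertex whose degree satisfies deg_G(u) ≤ χ*_DP(G − u) − 1, where G − u is the graph obtained by deleting u. Then χ*_DP(G) = χ*_DP(G − u). -/

import Mathlib

open scoped Classical

/-- A cover (in the sense of DP-coloring) of a simple graph `G`: a graph `H` on a finite
vertex set `W`, together with an assignment `L` of "lists" `L u ⊆ W` to the vertices of `G`,
such that the lists partition `W`, each list spans a clique, edges between distinct lists only
occur between lists of adjacent vertices, and for each edge `u v` of `G` the edges of `H`
between `L u` and `L v` form a (possibly empty) matching. -/
structure DPCover {V : Type} (G : SimpleGraph V) where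
  W : Type
  Wfin : Fintype W
  H : SimpleGraph W
  L : V → Set W
  part : ∀ x : W, ∃! u : V, x ∈ L u
  clique : ∀ u : V, ∀ x ∈ L u, ∀ y ∈ L u, x ≠ y → H.Adj x y
  cross : ∀ u v : V, u ≠ v → (∃ x ∈ L u, ∃ y ∈ L v, H.Adj x y) → G.Adj u v
  matching : ∀ u v : V, G.Adj u v → ∀ x ∈ L u, ∀ y ∈ L v, ∀ y' ∈ L v,
      H.Adj x y → H.Adj x y' → y = y'

namespace DPCover

variable {V : Type} {G : SimpleGraph V}

/-- A cover is `k`-fold if every list has exactly `k` elements. -/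
def IsKFold (C : DPCover G) (k : ℕ) : Prop := ∀ u : V, (C.L u).ncard = k

/-- A set of vertices of the cover graph is quasi-independent if it spans no cross-edges,
i.e. any edge of `H` inside `S` lies within a single list. -/
def QuasiIndep (C : DPCover G) (S : Set C.W) : Prop :=
  ∀ x ∈ S, ∀ y ∈ S, C.H.Adj x y → ∃ u : V, x ∈ C.L u ∧ y ∈ C.L u

/-- `G` has an `(η, 𝓗)`-coloring: a quasi-independent set meeting each list `L u`
in at least `η * |L u|` elements. -/
def HasFracColoring (C : DPCover G) (η : ℝ) : Prop :=
  ∃ S : Set C.W, C.QuasiIndep S ∧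
    ∀ u : V, η * ((C.L u).ncard : ℝ) ≤ ((C.L u ∩ S).ncard : ℝ)

/-- `G` has an `𝓗`-coloring: an independent set of `H` meeting every list in exactly
one vertex (equivalently, an independent set of size `|V(G)|`). -/
def HasColoring (C : DPCover G) : Prop :=
  ∃ S : Set C.W, (∀ x ∈ S, ∀ y ∈ S, ¬ C.H.Adj x y) ∧ ∀ u : V, (C.L u ∩ S).ncard = 1

end DPCover

/-- `θ_DP(G, k)`: the largest `η ∈ [0,1]` such that `G` admits an `(η, 𝓗)`-coloring for
every `k`-fold cover `𝓗` of `G`. -/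
noncomputable def thetaDP {V : Type} (G : SimpleGraph V) (k : ℕ) : ℝ :=
  sSup {η : ℝ | 0 ≤ η ∧ η ≤ 1 ∧
    ∀ C : DPCover G, C.IsKFold k → C.HasFracColoring η}

/-- The fractional DP-chromatic number `χ*_DP(G) = inf_{k ≥ 1} θ_DP(G, k)⁻¹`,
as an extended nonnegative real (so that `θ_DP(G,k) = 0` contributes `∞`). -/
noncomputable def chiDPStar {V : Type} (G : SimpleGraph V) : ENNReal :=
  ⨅ k ∈ {k : ℕ | 1 ≤ k}, (ENNReal.ofReal (thetaDP G k))⁻¹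

/-- A directed path of length `n` from `u` to `v` in the digraph given by the relation `D`:
a list of `n+1` distinct vertices starting at `u`, ending at `v`, with consecutive vertices
related by `D`. -/
def DirPath {V : Type} (D : V → V → Prop) (u v : V) (n : ℕ) : Prop :=
  ∃ l : List V, l.Chain' D ∧ l.Nodup ∧ l.head? = some u ∧ l.getLast? = some v ∧
    l.length = n + 1

section Aux

variable {V : Type}

lemma DPCover.list_eq {G : SimpleGraph V} (C : DPCover G) {x : C.W} {a b : V}
    (ha : x ∈ C.L a) (hb : x ∈ C.L b) : a = b := by
  obtain ⟨c, _, hu⟩ := C.part x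
  exact (hu a ha).trans (hu b hb).symm

variable (G : SimpleGraph V) (u : V)

/-- Restriction of a cover of `G` to a cover of `G - u`. -/
noncomputable def restrictCover (C : DPCover G) : DPCover (G.induce {v : V | v ≠ u}) where
  W := {x : C.W // x ∉ C.L u}
  Wfin := by haveI := C.Wfin; infer_instance
  H := C.H.comap Subtype.val
  L := fun v => {x | x.1 ∈ C.L v.1}
  part := by
    rintro ⟨x, hx⟩
    obtain ⟨v, hv, huniq⟩ := C.part x
    have hvu : v ≠ u := fun h => hx (h ▸ hv)
    exact ⟨⟨v, hvu⟩, hv, by rintro ⟨w, hw⟩ hmem; exact Subtype.ext (huniq w hmem)⟩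
  clique := by
    rintro v ⟨x, hx⟩ hxm ⟨y, hy⟩ hym hne
    exact C.clique v.1 x hxm y hym (fun h => hne (Subtype.ext h))
  cross := by
    rintro v w hvw ⟨x, hxm, y, hym, hadj⟩
    have : G.Adj v.1 w.1 := C.cross v.1 w.1 (fun h => hvw (Subtype.ext h)) ⟨x.1, hxm, y.1, hym, hadj⟩
    exact this
  matching := by
    rintro v w hadj x hx y hy y' hy' h1 h2
    exact Subtype.ext (C.matching v.1 w.1 hadj x.1 hx y.1 hy y'.1 hy' h1 h2)

lemma restrictCover_kfold (C : DPCover G) {k : ℕ} (hk : C.IsKFold k) :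
    (restrictCover G u C).IsKFold k := by
  rintro ⟨v, hv⟩
  have himg : Subtype.val '' ((restrictCover G u C).L ⟨v, hv⟩) = C.L v := by
    ext x
    constructor
    · rintro ⟨⟨y, hy⟩, hm, rfl⟩; exact hm
    · intro hx
      have hxu : x ∉ C.L u := fun hxu => hv (C.list_eq hx hxu)
      exact ⟨⟨x, hxu⟩, hx, rfl⟩
  calc ((restrictCover G u C).L ⟨v, hv⟩).ncard
      = (Subtype.val '' ((restrictCover G u C).L ⟨v, hv⟩)).ncard :=
        (Set.ncard_image_of_injective _ Subtype.val_injective).symm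
    _ = (C.L v).ncard := by rw [himg]
    _ = k := hk v


/-- Extension of a cover of `G - u` to a cover of `G`, adding a disjoint clique for `u`. -/
noncomputable def extendCover (k : ℕ) (C : DPCover (G.induce {v : V | v ≠ u})) : DPCover G where
  W := C.W ⊕ Fin k
  Wfin := by haveI := C.Wfin; infer_instance
  H := { Adj := fun a b => match a, b with
          | Sum.inl x, Sum.inl y => C.H.Adj x y
          | Sum.inr i, Sum.inr j => i ≠ j
          | _, _ => False
         symm := ⟨by rintro (x|i) (y|j) h <;> first | exact h.symm | exact h⟩
         loopless := ⟨by rintro (x|i) h <;> first | exact C.H.irrefl h | exact h rfl⟩ }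
  L := fun v => if h : v = u then Set.range Sum.inr else Sum.inl '' (C.L ⟨v, h⟩)
  part := by
    rintro (x|i)
    · obtain ⟨v, hv, huniq⟩ := C.part x
      refine ⟨v.1, ?_, ?_⟩
      · simp only [dif_neg v.2]
        exact ⟨x, by rwa [Subtype.coe_eta], rfl⟩
      · intro w hw
        by_cases hwu : w = u
        · simp only [dif_pos hwu] at hw
          obtain ⟨i, hi⟩ := hw
          exact absurd hi (by simp)
        · simp only [dif_neg hwu] at hw
          obtain ⟨y, hy, hxy⟩ := hw
          have : y = x := Sum.inl_injective hxy
          subst this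
          exact congrArg Subtype.val (huniq ⟨w, hwu⟩ hy)
    · refine ⟨u, by simp only [dif_pos rfl]; exact ⟨i, rfl⟩, ?_⟩
      intro w hw
      by_cases hwu : w = u
      · exact hwu
      · simp only [dif_neg hwu] at hw
        obtain ⟨y, _, hxy⟩ := hw
        exact absurd hxy (by simp)
  clique := by
    intro v x hx y hy hne
    by_cases hvu : v = u
    · simp only [dif_pos hvu] at hx hy
      obtain ⟨i, rfl⟩ := hx
      obtain ⟨j, rfl⟩ := hy
      exact fun h => hne (congrArg Sum.inr h)
    · simp only [dif_neg hvu] at hx hy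
      obtain ⟨a, ha, rfl⟩ := hx
      obtain ⟨b, hb, rfl⟩ := hy
      exact C.clique ⟨v, hvu⟩ a ha b hb (fun h => hne (congrArg Sum.inl h))
  cross := by
    intro v w hvw hedge
    obtain ⟨x, hx, y, hy, hadj⟩ := hedge
    by_cases hvu : v = u <;> by_cases hwu : w = u
    · exact absurd (hvu.trans hwu.symm) hvw
    · simp only [dif_pos hvu] at hx
      simp only [dif_neg hwu] at hy
      obtain ⟨i, rfl⟩ := hx
      obtain ⟨b, _, rfl⟩ := hy
      exact absurd hadj (by intro h; exact h)
    · simp only [dif_neg hvu] at hx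
      simp only [dif_pos hwu] at hy
      obtain ⟨a, _, rfl⟩ := hx
      obtain ⟨j, rfl⟩ := hy
      exact absurd hadj (by intro h; exact h)
    · simp only [dif_neg hvu] at hx
      simp only [dif_neg hwu] at hy
      obtain ⟨a, ha, rfl⟩ := hx
      obtain ⟨b, hb, rfl⟩ := hy
      have := C.cross ⟨v, hvu⟩ ⟨w, hwu⟩ (fun h => hvw (congrArg Subtype.val h))
        ⟨a, ha, b, hb, hadj⟩
      exact this
  matching := by
    intro v w hadj x hx y hy y' hy' h1 h2
    by_cases hvu : v = u
    · simp only [dif_pos hvu] at hx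
      obtain ⟨i, rfl⟩ := hx
      by_cases hwu : w = u
      · simp only [dif_pos hwu] at hy
        obtain ⟨j, rfl⟩ := hy
        exact absurd (hvu.trans hwu.symm) (G.ne_of_adj hadj)
      · simp only [dif_neg hwu] at hy
        obtain ⟨b, _, rfl⟩ := hy
        exact absurd h1 (by intro h; exact h)
    · simp only [dif_neg hvu] at hx
      obtain ⟨a, ha, rfl⟩ := hx
      by_cases hwu : w = u
      · simp only [dif_pos hwu] at hy
        obtain ⟨j, rfl⟩ := hy
        exact absurd h1 (by intro h; exact h)
      · simp only [dif_neg hwu] at hy hy'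
        obtain ⟨b, hb, rfl⟩ := hy
        obtain ⟨b', hb', rfl⟩ := hy'
        have hadj' : (G.induce {v : V | v ≠ u}).Adj ⟨v, hvu⟩ ⟨w, hwu⟩ := hadj
        exact congrArg Sum.inl (C.matching _ _ hadj' a ha b hb b' hb' h1 h2)

lemma extendCover_kfold (k : ℕ) (C : DPCover (G.induce {v : V | v ≠ u}))
    (hk : C.IsKFold k) : (extendCover G u k C).IsKFold k := by
  intro v
  show (if h : v = u then Set.range Sum.inr else Sum.inl '' (C.L ⟨v, h⟩)).ncard = k
  by_cases hvu : v = u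
  · simp only [dif_pos hvu, ← Set.image_univ, Set.ncard_image_of_injective _ Sum.inr_injective,
      Set.ncard_univ, Nat.card_eq_fintype_card, Fintype.card_fin]
  · simp only [dif_neg hvu, Set.ncard_image_of_injective _ Sum.inl_injective]
    exact hk _

lemma zero_mem_thetaSet (k : ℕ) :
    (0:ℝ) ∈ {η : ℝ | 0 ≤ η ∧ η ≤ 1 ∧ ∀ C : DPCover G, C.IsKFold k → C.HasFracColoring η} := by
  refine ⟨le_refl _, zero_le_one, fun C _ => ⟨∅, fun x hx => absurd hx (Set.notMem_empty x), ?_⟩⟩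
  intro v
  simp

lemma bddAbove_thetaSet (k : ℕ) :
    BddAbove {η : ℝ | 0 ≤ η ∧ η ≤ 1 ∧ ∀ C : DPCover G, C.IsKFold k → C.HasFracColoring η} :=
  ⟨1, fun _ hη => hη.2.1⟩

lemma thetaDP_nonneg (k : ℕ) : 0 ≤ thetaDP G k :=
  le_csSup (bddAbove_thetaSet G k) (zero_mem_thetaSet G k)

lemma thetaDP_le_one (k : ℕ) : thetaDP G k ≤ 1 :=
  csSup_le ⟨0, zero_mem_thetaSet G k⟩ (fun _ hη => hη.2.1)

lemma hasFrac_restrict (k : ℕ) (C : DPCover (G.induce {v : V | v ≠ u})) {η : ℝ}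
    (hcol : (extendCover G u k C).HasFracColoring η) : C.HasFracColoring η := by
  obtain ⟨S, hqi, hcount⟩ := hcol
  refine ⟨Sum.inl ⁻¹' S, ?_, ?_⟩
  · intro x hx y hy hadj
    have hadj' : (extendCover G u k C).H.Adj (Sum.inl x) (Sum.inl y) := hadj
    obtain ⟨w, hw1, hw2⟩ := hqi _ hx _ hy hadj'
    by_cases hwu : w = u
    · exfalso
      have hw1' : Sum.inl x ∈ (extendCover G u k C).L w := hw1
      simp only [extendCover, dif_pos hwu] at hw1'
      obtain ⟨i, hi⟩ := hw1'
      exact absurd hi (by simp)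
    · refine ⟨⟨w, hwu⟩, ?_, ?_⟩
      · have hw1' : Sum.inl x ∈ (extendCover G u k C).L w := hw1
        simp only [extendCover, dif_neg hwu] at hw1'
        obtain ⟨a, ha, hax⟩ := hw1'
        rwa [← Sum.inl_injective hax]
      · have hw2' : Sum.inl y ∈ (extendCover G u k C).L w := hw2
        simp only [extendCover, dif_neg hwu] at hw2'
        obtain ⟨a, ha, hax⟩ := hw2'
        rwa [← Sum.inl_injective hax]
  · intro v
    have hcv := hcount v.1
    have hL : (extendCover G u k C).L v.1 = Sum.inl '' (C.L v) := by
      simp only [extendCover, dif_neg v.2]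
    have himg : Sum.inl '' (C.L v ∩ Sum.inl ⁻¹' S) = (Sum.inl '' (C.L v)) ∩ S := by
      ext x
      cases x with
      | inl a =>
        constructor
        · rintro ⟨b, ⟨hb, hbS⟩, hba⟩
          cases Sum.inl_injective hba
          exact ⟨⟨a, hb, rfl⟩, hbS⟩
        · rintro ⟨⟨b, hb, hba⟩, haS⟩
          cases Sum.inl_injective hba
          exact ⟨a, ⟨hb, haS⟩, rfl⟩
      | inr i =>
        constructor
        · rintro ⟨b, _, hb⟩; exact absurd hb Sum.inl_ne_inr
        · rintro ⟨⟨b, _, hb⟩, _⟩; exact absurd hb Sum.inl_ne_inr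
    rw [hL] at hcv
    have e : Set.ncard (Sum.inl '' C.L v : Set (C.W ⊕ Fin k)) = (C.L v).ncard :=
      Set.ncard_image_of_injective _ Sum.inl_injective
    calc η * ((C.L v).ncard : ℝ) ≤ ((Sum.inl '' (C.L v) ∩ S).ncard : ℝ) := by rw [← e]; exact hcv
      _ = ((C.L v ∩ Sum.inl ⁻¹' S).ncard : ℝ) := by
          rw [← himg, Set.ncard_image_of_injective _ Sum.inl_injective]

lemma thetaDP_le_theta_restrict (k : ℕ) :
    thetaDP G k ≤ thetaDP (G.induce {v : V | v ≠ u}) k := by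
  apply csSup_le_csSup (bddAbove_thetaSet _ k) ⟨0, zero_mem_thetaSet G k⟩
  rintro η ⟨h0, h1, hall⟩
  refine ⟨h0, h1, fun C' hC' => ?_⟩
  exact hasFrac_restrict G u k C' (hall _ (extendCover_kfold G u k C' hC'))

lemma hasFrac_extend_main [Fintype V] [DecidableEq V] (k m : ℕ) (hk : 1 ≤ k)
    (hdm : G.degree u * m + m ≤ k)
    (hA : ∀ C' : DPCover (G.induce {v : V | v ≠ u}), C'.IsKFold k →
      C'.HasFracColoring ((m:ℝ)/(k:ℝ)))
    (C : DPCover G) (hC : C.IsKFold k) : C.HasFracColoring ((m:ℝ)/(k:ℝ)) := by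
  haveI := C.Wfin
  have hk0 : (k:ℝ) ≠ 0 := by positivity
  have hmk : (m:ℝ)/(k:ℝ) * (k:ℝ) = (m:ℝ) := div_mul_cancel₀ _ hk0
  obtain ⟨S', hqi', hcount'⟩ := hA (restrictCover G u C) (restrictCover_kfold G u C hC)
  set S'' : Set C.W := Subtype.val '' S' with hS''def
  have hS''u : ∀ x ∈ S'', x ∉ C.L u := by
    rintro x ⟨⟨y, hy⟩, _, rfl⟩
    exact hy
  have hqi'' : ∀ x ∈ S'', ∀ y ∈ S'', C.H.Adj x y → ∃ w : V, x ∈ C.L w ∧ y ∈ C.L w := by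
    rintro x ⟨x', hx', rfl⟩ y ⟨y', hy', rfl⟩ hadj
    obtain ⟨w, hw1, hw2⟩ := hqi' x' hx' y' hy' hadj
    exact ⟨w.1, hw1, hw2⟩
  have hcount'' : ∀ v : V, v ≠ u → (m:ℝ) ≤ ((C.L v ∩ S'').ncard : ℝ) := by
    intro v hv
    have h1 := hcount' ⟨v, hv⟩
    rw [restrictCover_kfold G u C hC ⟨v, hv⟩, hmk] at h1
    have himg : Subtype.val '' ((restrictCover G u C).L ⟨v, hv⟩ ∩ S') = C.L v ∩ S'' := by
      ext x
      constructor
      · rintro ⟨⟨y, hyu⟩, ⟨hyL, hyS⟩, rfl⟩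
        exact ⟨hyL, ⟨⟨y, hyu⟩, hyS, rfl⟩⟩
      · rintro ⟨hxL, ⟨⟨y, hyu⟩, hyS, rfl⟩⟩
        exact ⟨⟨y, hyu⟩, ⟨hxL, hyS⟩, rfl⟩
    rw [← himg, Set.ncard_image_of_injective _ Subtype.val_injective]
    exact h1
  have hcountN : ∀ v : V, v ≠ u → m ≤ (C.L v ∩ S'').ncard := by
    intro v hv
    exact_mod_cast (Nat.cast_le (α := ℝ)).mp (by exact_mod_cast hcount'' v hv)
  -- choose trimmed sets
  have hTex : ∀ v : V, ∃ t : Set C.W,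
      (G.Adj u v → t ⊆ C.L v ∩ S'' ∧ t.ncard = m) ∧ (¬ G.Adj u v → t = ∅) := by
    intro v
    by_cases hv : G.Adj u v
    · obtain ⟨t, ht1, ht2⟩ := Set.exists_subset_card_eq (hcountN v (G.ne_of_adj hv).symm)
      exact ⟨t, fun _ => ⟨ht1, ht2⟩, fun h => absurd hv h⟩
    · exact ⟨∅, fun h => absurd h hv, fun _ => rfl⟩
  choose T hT1 hT2 using hTex
  -- the unblocked part of L u
  set U : Set C.W := {x ∈ C.L u | ∀ v, G.Adj u v → ∀ y ∈ T v, ¬ C.H.Adj x y} with hUdef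
  have hUsub : U ⊆ C.L u := fun x hx => hx.1
  set B : Set C.W := C.L u \ U with hBdef
  have hBsub : B ⊆ C.L u := Set.diff_subset
  -- counting the blocked part
  have hBv : ∀ v : V, G.Adj u v → {x ∈ C.L u | ∃ y ∈ T v, C.H.Adj x y}.ncard ≤ m := by
    intro v hv
    have := (hT1 v hv).2
    rw [← this]
    apply Set.ncard_le_ncard_of_injOn
      (fun x => if h : ∃ y ∈ T v, C.H.Adj x y then h.choose else x)
    · rintro x ⟨hxu, hy⟩
      simp only [dif_pos hy]
      exact hy.choose_spec.1
    · rintro x ⟨hxu, hyx⟩ x' ⟨hxu', hyx'⟩ heq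
      simp only [dif_pos hyx, dif_pos hyx'] at heq
      have h1 := hyx.choose_spec
      have h2 := hyx'.choose_spec
      rw [heq] at h1
      have hyL : hyx'.choose ∈ C.L v := ((hT1 v hv).1 h1.1).1
      exact C.matching v u hv.symm hyx'.choose hyL x hxu x' hxu' h1.2.symm h2.2.symm
  have hBle : B.ncard ≤ G.degree u * m := by
    have hsub : B.toFinset ⊆ (G.neighborFinset u).biUnion
        (fun v => {x ∈ C.L u | ∃ y ∈ T v, C.H.Adj x y}.toFinset) := by
      intro x hx
      rw [Set.mem_toFinset] at hx
      obtain ⟨hxu, hxb⟩ := hx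
      have hP : ¬ ∀ v, G.Adj u v → ∀ y ∈ T v, ¬ C.H.Adj x y := fun hp => hxb ⟨hxu, hp⟩
      push_neg at hP
      obtain ⟨v, hv, y, hy, hadj⟩ := hP
      refine Finset.mem_biUnion.2 ⟨v, (G.mem_neighborFinset u v).2 hv, ?_⟩
      rw [Set.mem_toFinset]
      exact ⟨hxu, y, hy, hadj⟩
    calc B.ncard = B.toFinset.card := Set.ncard_eq_toFinset_card' B
      _ ≤ ((G.neighborFinset u).biUnion
          (fun v => {x ∈ C.L u | ∃ y ∈ T v, C.H.Adj x y}.toFinset)).card :=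
        Finset.card_le_card hsub
      _ ≤ ∑ v ∈ G.neighborFinset u, {x ∈ C.L u | ∃ y ∈ T v, C.H.Adj x y}.toFinset.card :=
        Finset.card_biUnion_le
      _ ≤ ∑ _v ∈ G.neighborFinset u, m := by
          apply Finset.sum_le_sum
          intro v hv
          rw [← Set.ncard_eq_toFinset_card']
          exact hBv v ((G.mem_neighborFinset u v).1 hv)
      _ = G.degree u * m := by rw [Finset.sum_const, smul_eq_mul, G.card_neighborFinset_eq_degree]
  have hUge : m ≤ U.ncard := by
    have hUB : U = C.L u \ B := by
      rw [hBdef, Set.diff_diff_cancel_left hUsub]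
    have : (C.L u \ B).ncard = (C.L u).ncard - B.ncard := Set.ncard_diff hBsub
    rw [hUB, this, hC u]
    omega
  -- assemble the coloring
  set ST : Set C.W := ⋃ v ∈ {v : V | G.Adj u v}, T v with hSTdef
  set NL : Set C.W := ⋃ v ∈ {v : V | G.Adj u v}, C.L v with hNLdef
  have hST_mem : ∀ x, x ∈ ST ↔ ∃ v, G.Adj u v ∧ x ∈ T v := by
    intro x; simp [hSTdef]
  have hNL_mem : ∀ x, x ∈ NL ↔ ∃ v, G.Adj u v ∧ x ∈ C.L v := by
    intro x; simp [hNLdef]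
  set SA : Set C.W := S'' \ NL with hSAdef
  have hST_S'' : ∀ x ∈ ST, x ∈ S'' := by
    intro x hx
    obtain ⟨v, hv, hxv⟩ := (hST_mem x).1 hx
    exact ((hT1 v hv).1 hxv).2
  have hU_cross : ∀ x ∈ U, ∀ y, y ∈ SA ∪ ST → ¬ C.H.Adj x y := by
    intro x hx y hy hadj
    rcases hy with hy | hy
    · obtain ⟨w, hw, -⟩ := C.part y
      have hwu : w ≠ u := fun h => hS''u y hy.1 (h ▸ hw)
      have hnadj : ¬ G.Adj u w := fun hadj' => hy.2 ((hNL_mem y).2 ⟨w, hadj', hw⟩)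
      exact hnadj (C.cross u w (Ne.symm hwu) ⟨x, hx.1, y, hw, hadj⟩)
    · obtain ⟨v, hv, hyv⟩ := (hST_mem y).1 hy
      exact hx.2 v hv y hyv hadj
  refine ⟨SA ∪ (ST ∪ U), ?_, ?_⟩
  · -- quasi-independence
    intro x hx y hy hadj
    rcases hx with hx | hx | hx <;> rcases hy with hy | hy | hy
    · exact hqi'' x hx.1 y hy.1 hadj
    · exact hqi'' x hx.1 y (hST_S'' y hy) hadj
    · exact (hU_cross y hy x (Or.inl hx) hadj.symm).elim
    · exact hqi'' x (hST_S'' x hx) y hy.1 hadj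
    · exact hqi'' x (hST_S'' x hx) y (hST_S'' y hy) hadj
    · exact (hU_cross y hy x (Or.inr hx) hadj.symm).elim
    · exact (hU_cross x hx y (Or.inl hy) hadj).elim
    · exact (hU_cross x hx y (Or.inr hy) hadj).elim
    · exact ⟨u, hx.1, hy.1⟩
  · -- counting
    intro w
    rw [hC w, hmk]
    have hsplit : C.L w ∩ (SA ∪ (ST ∪ U)) = (C.L w ∩ SA) ∪ ((C.L w ∩ ST) ∪ (C.L w ∩ U)) := by
      rw [Set.inter_union_distrib_left, Set.inter_union_distrib_left]
    by_cases hwu : w = u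
    · subst hwu
      have h1 : C.L w ∩ SA = ∅ := by
        ext x; simp only [Set.mem_inter_iff, Set.mem_empty_iff_false, iff_false]
        rintro ⟨hxL, hxSA⟩; exact hS''u x hxSA.1 hxL
      have h2 : C.L w ∩ ST = ∅ := by
        ext x; simp only [Set.mem_inter_iff, Set.mem_empty_iff_false, iff_false]
        rintro ⟨hxL, hxST⟩; exact hS''u x (hST_S'' x hxST) hxL
      have h3 : C.L w ∩ U = U := Set.inter_eq_self_of_subset_right hUsub
      rw [hsplit, h1, h2, h3, Set.empty_union, Set.empty_union]
      exact_mod_cast hUge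
    · by_cases hadj : G.Adj u w
      · have h1 : C.L w ∩ SA = ∅ := by
          ext x; simp only [Set.mem_inter_iff, Set.mem_empty_iff_false, iff_false]
          rintro ⟨hxL, hxSA⟩; exact hxSA.2 ((hNL_mem x).2 ⟨w, hadj, hxL⟩)
        have h2 : C.L w ∩ ST = T w := by
          ext x
          constructor
          · rintro ⟨hxL, hxST⟩
            obtain ⟨v, hv, hxv⟩ := (hST_mem x).1 hxST
            have hxLv : x ∈ C.L v := ((hT1 v hv).1 hxv).1
            rwa [C.list_eq hxLv hxL] at hxv
          · intro hx
            exact ⟨((hT1 w hadj).1 hx).1, (hST_mem x).2 ⟨w, hadj, hx⟩⟩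
        have h3 : C.L w ∩ U = ∅ := by
          ext x; simp only [Set.mem_inter_iff, Set.mem_empty_iff_false, iff_false]
          rintro ⟨hxL, hxU⟩; exact hwu (C.list_eq hxL hxU.1)
        rw [hsplit, h1, h2, h3, Set.empty_union, Set.union_empty, (hT1 w hadj).2]
      · have h1 : C.L w ∩ SA = C.L w ∩ S'' := by
          ext x
          constructor
          · rintro ⟨hxL, hxSA⟩; exact ⟨hxL, hxSA.1⟩
          · rintro ⟨hxL, hxS⟩
            refine ⟨hxL, hxS, fun hxNL => ?_⟩
            obtain ⟨v, hv, hxv⟩ := (hNL_mem x).1 hxNL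
            exact hadj ((C.list_eq hxv hxL) ▸ hv)
        have h2 : C.L w ∩ ST = ∅ := by
          ext x; simp only [Set.mem_inter_iff, Set.mem_empty_iff_false, iff_false]
          rintro ⟨hxL, hxST⟩
          obtain ⟨v, hv, hxv⟩ := (hST_mem x).1 hxST
          exact hadj ((C.list_eq (((hT1 v hv).1 hxv).1) hxL) ▸ hv)
        have h3 : C.L w ∩ U = ∅ := by
          ext x; simp only [Set.mem_inter_iff, Set.mem_empty_iff_false, iff_false]
          rintro ⟨hxL, hxU⟩; exact hwu (C.list_eq hxL hxU.1)
        rw [hsplit, h1, h2, h3, Set.empty_union, Set.union_empty]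
        exact hcount'' w hwu

lemma thetaDP_eq_main [Fintype V] [DecidableEq V] (k : ℕ) (hk : 1 ≤ k)
    (hbound : ((G.degree u : ℝ) + 1) * thetaDP (G.induce {v : V | v ≠ u}) k ≤ 1) :
    thetaDP G k = thetaDP (G.induce {v : V | v ≠ u}) k := by
  refine le_antisymm (thetaDP_le_theta_restrict G u k) ?_
  apply csSup_le ⟨0, zero_mem_thetaSet _ k⟩
  rintro η ⟨h0, h1, hall⟩
  have hkR : (0:ℝ) < (k:ℝ) := by exact_mod_cast hk
  set m : ℕ := ⌈η * k⌉₊ with hm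
  have hηm : η * k ≤ (m:ℝ) := Nat.le_ceil _
  have hmk1 : (m:ℝ) ≤ (k:ℝ) := by
    have h' : η * k ≤ (k:ℝ) := by nlinarith
    exact_mod_cast Nat.ceil_le.2 h'
  have hdiv0 : (0:ℝ) ≤ (m:ℝ)/(k:ℝ) := by positivity
  have hdiv1 : (m:ℝ)/(k:ℝ) ≤ 1 := by rw [div_le_one hkR]; exact hmk1
  have hmem : ((m:ℝ)/(k:ℝ)) ∈ {η : ℝ | 0 ≤ η ∧ η ≤ 1 ∧
      ∀ C' : DPCover (G.induce {v : V | v ≠ u}), C'.IsKFold k → C'.HasFracColoring η} := by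
    refine ⟨hdiv0, hdiv1, fun C' hC' => ?_⟩
    obtain ⟨S, hqi, hcount⟩ := hall C' hC'
    refine ⟨S, hqi, fun v => ?_⟩
    have h2 := hcount v
    rw [hC' v] at h2 ⊢
    rw [div_mul_cancel₀ _ (ne_of_gt hkR)]
    have h3 : m ≤ ((C'.L v ∩ S).ncard) := Nat.ceil_le.2 h2
    exact_mod_cast h3
  have hle : (m:ℝ)/(k:ℝ) ≤ thetaDP (G.induce {v : V | v ≠ u}) k :=
    le_csSup (bddAbove_thetaSet _ k) hmem
  have hdm : G.degree u * m + m ≤ k := by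
    have h2 : ((G.degree u : ℝ) + 1) * ((m:ℝ)/(k:ℝ)) ≤ 1 := by
      have hd0 : (0:ℝ) ≤ (G.degree u : ℝ) + 1 := by positivity
      calc ((G.degree u : ℝ) + 1) * ((m:ℝ)/(k:ℝ))
          ≤ ((G.degree u : ℝ) + 1) * thetaDP (G.induce {v : V | v ≠ u}) k :=
            mul_le_mul_of_nonneg_left hle hd0
        _ ≤ 1 := hbound
    have h3 : ((G.degree u : ℝ) + 1) * (m:ℝ) ≤ (k:ℝ) := by
      have h5 := mul_le_mul_of_nonneg_right h2 hkR.le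
      rw [mul_assoc, div_mul_cancel₀ _ (ne_of_gt hkR), one_mul] at h5
      linarith
    have h4 : ((G.degree u * m + m : ℕ) : ℝ) ≤ ((k:ℕ):ℝ) := by push_cast; nlinarith
    exact_mod_cast h4
  have hmemG : ((m:ℝ)/(k:ℝ)) ∈ {η : ℝ | 0 ≤ η ∧ η ≤ 1 ∧
      ∀ C : DPCover G, C.IsKFold k → C.HasFracColoring η} :=
    ⟨hdiv0, hdiv1, fun C hC =>
      hasFrac_extend_main G u k m hk hdm (fun C' hC' => hmem.2.2 C' hC') C hC⟩
  have hηmk : η ≤ (m:ℝ)/(k:ℝ) := by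
    rw [le_div_iff₀ hkR]
    exact hηm
  exact le_trans hηmk (le_csSup (bddAbove_thetaSet G k) hmemG)

end Aux

/-- Let `G` be a finite simple graph and `u` a vertex with
`deg_G(u) ≤ χ*_DP(G - u) - 1`, where `G - u` is obtained from `G` by deleting `u`.
Then `χ*_DP(G) = χ*_DP(G - u)`. -/
theorem stmt12 {V : Type} [Fintype V] [DecidableEq V] (G : SimpleGraph V) (u : V)
    (h : (G.degree u : ENNReal) ≤ chiDPStar (G.induce {v : V | v ≠ u}) - 1) :
    chiDPStar G = chiDPStar (G.induce {v : V | v ≠ u}) := by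
  have hone : (1:ENNReal) ≤ chiDPStar (G.induce {v : V | v ≠ u}) := by
    refine le_iInf₂ fun k hk => ?_
    rw [ENNReal.one_le_inv]
    exact ENNReal.ofReal_le_one.2 (thetaDP_le_one _ k)
  have hd1 : (G.degree u : ENNReal) + 1 ≤ chiDPStar (G.induce {v : V | v ≠ u}) :=
    calc (G.degree u : ENNReal) + 1
        ≤ (chiDPStar (G.induce {v : V | v ≠ u}) - 1) + 1 := add_le_add_left h 1
      _ = chiDPStar (G.induce {v : V | v ≠ u}) := tsub_add_cancel_of_le hone
  have hbound : ∀ k : ℕ, 1 ≤ k →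
      ((G.degree u : ℝ) + 1) * thetaDP (G.induce {v : V | v ≠ u}) k ≤ 1 := by
    intro k hk
    set θ := thetaDP (G.induce {v : V | v ≠ u}) k with hθ
    have hθ0 : 0 ≤ θ := thetaDP_nonneg _ k
    have h2 : chiDPStar (G.induce {v : V | v ≠ u}) ≤ (ENNReal.ofReal θ)⁻¹ :=
      iInf₂_le k hk
    have h4 : ENNReal.ofReal θ * ((G.degree u : ENNReal) + 1) ≤ 1 :=
      ENNReal.le_inv_iff_mul_le.1 (ENNReal.le_inv_iff_le_inv.mpr (le_trans hd1 h2))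
    have h5 : ((G.degree u : ENNReal) + 1) = ENNReal.ofReal ((G.degree u : ℝ) + 1) := by
      rw [ENNReal.ofReal_add (by positivity) zero_le_one, ENNReal.ofReal_natCast,
        ENNReal.ofReal_one]
    rw [h5, ← ENNReal.ofReal_mul hθ0] at h4
    have h6 : θ * ((G.degree u : ℝ) + 1) ≤ 1 := ENNReal.ofReal_le_one.1 h4
    linarith [h6]
  have hfinal : ∀ k : ℕ, 1 ≤ k →
      thetaDP G k = thetaDP (G.induce {v : V | v ≠ u}) k :=
    fun k hk => thetaDP_eq_main G u k hk (hbound k hk)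
  unfold chiDPStar
  exact iInf_congr fun k => iInf_congr fun hk => by rw [hfinal k hk]
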